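/- Cartesian products (with Kuratowski ordered pairs) exist for well-founded extensional apgs: for any two well-founded extensional apgs X and Y (on types in a fixed universe) there exists a well-founded extensional apg Z (on a type in the same universe) such that for every well-founded extensional apg W, W ⋿ Z if and only if there exist well-founded extensional apgs A and B with A ⋿ X, B ⋿ Y, and W a Kuratowski pair of (A, B). -/

import Mathlib

universe u v

/-- A relation is (inductively) well-founded if every inductive subset is the whole type:
`S` is inductive when `x ∈ S` whenever every child of `x` is in `S`. -/
def IsWFRel {X : Type u} (r : X → X → Prop) : Prop :=
  ∀ S : Set X, (∀ x, (∀ y, r y x → y ∈ S) → x ∈ S) → S = Set.univ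

/-- A relation is extensional if nodes with the same children are equal. -/
def IsExtRel {X : Type u} (r : X → X → Prop) : Prop :=
  ∀ x y, (∀ z, r z x ↔ r z y) → x = y

/-- `Below r x` is the full subgraph `X/x` of nodes admitting a (possibly empty) path to `x`. -/
def Below {X : Type u} (r : X → X → Prop) (x : X) : Type u :=
  {z : X // Relation.ReflTransGen r z x}

/-- The induced relation on the subgraph `X/x`. -/
def belowRel {X : Type u} (r : X → X → Prop) (x : X) :
    Below r x → Below r x → Prop :=
  fun a b => r a.1 b.1

/-- The root of the pointed subgraph `X/x`. -/
def belowRoot {X : Type u} (r : X → X → Prop) (x : X) : Below r x :=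
  ⟨x, Relation.ReflTransGen.refl⟩

/-- Isomorphism of pointed graphs: a relation-preserving-and-reflecting bijection
taking the first distinguished point to the second. -/
def PIso {X : Type u} {Y : Type v} (rX : X → X → Prop) (rY : Y → Y → Prop)
    (x : X) (y : Y) : Prop :=
  ∃ f : X ≃ Y, (∀ a b, rX a b ↔ rY (f a) (f b)) ∧ f x = y

/-- A simulation of graphs. -/
def IsSimulation {X : Type u} {Y : Type v} (rX : X → X → Prop)
    (rY : Y → Y → Prop) (f : X → Y) : Prop :=
  (∀ a b, rX a b → rY (f a) (f b)) ∧
  (∀ x y, rY y (f x) → ∃ a, rX a x ∧ f a = y)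

/-- A bisimulation between graphs. -/
def IsBisimulation {X : Type u} {Y : Type v} (rX : X → X → Prop)
    (rY : Y → Y → Prop) (R : X → Y → Prop) : Prop :=
  ∀ x y, R x y →
    (∀ x', rX x' x → ∃ y', rY y' y ∧ R x' y') ∧
    (∀ y', rY y' y → ∃ x', rX x' x ∧ R x' y')

/-- A bi-entire relation. -/
def BiEntire {X : Type u} {Y : Type v} (R : X → Y → Prop) : Prop :=
  (∀ x, ∃ y, R x y) ∧ (∀ y, ∃ x, R x y)

/-- A well-founded extensional accessible pointed graph ("apg") on a type in universe `u`. -/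
structure WEApg : Type (u + 1) where
  carrier : Type u
  rel : carrier → carrier → Prop
  root : carrier
  acc : ∀ x, Relation.ReflTransGen rel x root
  wf : IsWFRel rel
  ext : IsExtRel rel

/-- Isomorphism of (the underlying pointed graphs of) apgs. -/
def WEApg.Iso (X Y : WEApg.{u}) : Prop :=
  PIso X.rel Y.rel X.root Y.root

/-- Membership of the pointed graph `(W, rW, w)` in the pointed graph `(Y, rY, y)`:
`(W, rW, w)` is isomorphic as a pointed graph to `(Y, rY)/z` for some child `z` of `y`. -/
def MemPGAt {W : Type u} {Y : Type v} (rW : W → W → Prop) (w : W)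
    (rY : Y → Y → Prop) (y : Y) : Prop :=
  ∃ z, rY z y ∧ PIso rW (belowRel rY z) w (belowRoot rY z)

/-- `X ⋿ Y` for apgs: `X` is isomorphic as a pointed graph to `Y/y` for some member
(child of the root) `y` of `Y`. -/
def WEApg.Mem (X Y : WEApg.{u}) : Prop :=
  MemPGAt X.rel X.root Y.rel Y.root

/-- `W` is a Kuratowski ordered pair of `(A, B)`. -/
def IsKuratowskiPair (W A B : WEApg.{u}) : Prop :=
  ∃ P Q : WEApg.{u},
    (∀ Z : WEApg.{u}, Z.Mem W ↔ (Z.Iso P ∨ Z.Iso Q)) ∧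
    (∀ Z : WEApg.{u}, Z.Mem P ↔ Z.Iso A) ∧
    (∀ Z : WEApg.{u}, Z.Mem Q ↔ (Z.Iso A ∨ Z.Iso B))

/-!
Every well-founded graph has a unique decoration, the map `d` into ZF sets with
`d x = {d y | y ≺ x}`. On an extensional graph it is injective (Mostowski), and two accessible
such pointed graphs are isomorphic exactly when their roots have the same decoration. So
`Z ↦ d Z.root` identifies isomorphism classes of well-founded extensional apgs with ZF sets and
turns `⋿` into `∈`; it is onto because the membership tree of any pre-set, collapsed along its
decoration, is such an apg. Under this dictionary a Kuratowski pair of apgs is `ZFSet.pair`, and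
the apg of `ZFSet.prod` is the required product.
-/

open Relation Function

theorem isWFRel_iff_wellFounded {X : Type u} {r : X → X → Prop} :
    IsWFRel r ↔ WellFounded r :=
  ⟨fun h => ⟨fun x => Set.eq_univ_iff_forall.1 (h {x | Acc r x} fun x => Acc.intro x) x⟩,
    fun h _ hS => Set.eq_univ_of_forall fun x => h.induction x hS⟩

section IsDecoration

variable {X : Type*} {r : X → X → Prop} {d : X → ZFSet.{u}}

variable (r) in
def IsDecoration (d : X → ZFSet.{u}) : Prop :=
  ∀ x z, z ∈ d x ↔ ∃ y, r y x ∧ d y = z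

theorem IsDecoration.mem_of_rel (hd : IsDecoration r d) {a b : X} (h : r a b) : d a ∈ d b :=
  (hd b _).2 ⟨a, h, rfl⟩

theorem IsDecoration.mem_iff (hd : IsDecoration r d) (hinj : Injective d) {a b : X} :
    d a ∈ d b ↔ r a b :=
  ⟨fun h => by obtain ⟨y, hy, he⟩ := (hd b _).1 h; rwa [← hinj he], hd.mem_of_rel⟩

theorem IsDecoration.unique (wf : WellFounded r) {d' : X → ZFSet.{u}} (hd : IsDecoration r d)
    (hd' : IsDecoration r d') : d = d' := by
  funext x
  induction x using wf.induction with
  | _ x ih =>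
    ext z
    rw [hd, hd']
    exact exists_congr fun y => and_congr_right fun hy => by rw [ih y hy]

theorem IsDecoration.injective (wf : WellFounded r) (ext : IsExtRel r)
    (hd : IsDecoration r d) : Injective d := by
  intro a
  induction a using wf.induction with
  | _ a ih =>
    intro b hab
    refine ext a b fun z => ⟨fun hz => ?_, fun hz => ?_⟩
    · obtain ⟨y, hy, he⟩ := (hd b _).1 (hab ▸ hd.mem_of_rel hz)
      rwa [ih z hz he.symm]
    · obtain ⟨y, hy, he⟩ := (hd a _).1 (hab ▸ hd.mem_of_rel hz)
      rwa [← ih y hy he]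

theorem IsDecoration.isExtRel (hd : IsDecoration r d) (hinj : Injective d) : IsExtRel r :=
  fun a b h => hinj <| ZFSet.ext fun z => by rw [hd, hd]; exact exists_congr fun y => by rw [h]

theorem IsDecoration.comp_equiv {Y : Type*} {s : Y → Y → Prop} {e : Y → ZFSet.{u}}
    (he : IsDecoration s e) (f : X ≃ Y) (hf : ∀ a b, r a b ↔ s (f a) (f b)) :
    IsDecoration r (e ∘ f) := fun x z => by
  rw [comp_apply, he, f.exists_congr_left]
  simp only [hf, comp_apply, Equiv.apply_symm_apply]

theorem IsDecoration.below (hd : IsDecoration r d) (x : X) :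
    IsDecoration (belowRel r x) fun a => d a.1 := fun a z => by
  rw [hd]
  exact ⟨fun ⟨y, hy, he⟩ => ⟨⟨y, .head hy a.2⟩, hy, he⟩, fun ⟨b, hb, he⟩ => ⟨b.1, hb, he⟩⟩

theorem IsDecoration.exists_eq_of_reflTransGen {Y : Type*} {s : Y → Y → Prop}
    {e : Y → ZFSet.{u}} (hd : IsDecoration r d) (he : IsDecoration s e) {x₀ x : X} {y₀ : Y}
    (h₀ : d x₀ = e y₀) (hx : ReflTransGen r x x₀) : ∃ y, e y = d x := by
  induction hx using ReflTransGen.head_induction_on with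
  | refl => exact ⟨y₀, h₀.symm⟩
  | head hxx' _ ih =>
    obtain ⟨y', hy'⟩ := ih
    obtain ⟨y, -, hy⟩ := (he y' _).1 (hy' ▸ hd.mem_of_rel hxx')
    exact ⟨y, hy⟩

theorem IsDecoration.pIso_iff {Y : Type*} {s : Y → Y → Prop} {e : Y → ZFSet.{u}}
    (wfr : WellFounded r) (wfs : WellFounded s) (extr : IsExtRel r) (exts : IsExtRel s)
    (hd : IsDecoration r d) (he : IsDecoration s e) {x₀ : X} {y₀ : Y}
    (accr : ∀ x, ReflTransGen r x x₀) (accs : ∀ y, ReflTransGen s y y₀) :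
    PIso r s x₀ y₀ ↔ d x₀ = e y₀ := by
  constructor
  · rintro ⟨f, hf, rfl⟩
    rw [hd.unique wfr (he.comp_equiv f hf), comp_apply]
  · intro h₀
    have hdi := hd.injective wfr extr
    have hei := he.injective wfs exts
    choose f hf using fun x => hd.exists_eq_of_reflTransGen he h₀ (accr x)
    have hbij : Bijective f := by
      refine ⟨fun a b hab => hdi ?_, fun y => ?_⟩
      · rw [← hf, ← hf, hab]
      · obtain ⟨x, hx⟩ := he.exists_eq_of_reflTransGen hd h₀.symm (accs y)
        exact ⟨x, hei (by rw [hf, hx])⟩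
    refine ⟨.ofBijective f hbij, fun a b => ?_, hei (by simp [hf, h₀])⟩
    simp only [Equiv.ofBijective_apply, ← he.mem_iff hei, hf, hd.mem_iff hdi]

theorem isDecoration_of_range_transitive {g : X → ZFSet.{u}}
    (hg : ∀ x, ∀ z ∈ g x, z ∈ Set.range g) : IsDecoration (fun a b => g a ∈ g b) g :=
  fun x z => ⟨fun hz => by obtain ⟨y, rfl⟩ := hg x z hz; exact ⟨y, hz, rfl⟩,
    fun ⟨_, h, he⟩ => he ▸ h⟩

end IsDecoration

noncomputable def decoration {X : Type u} (r : X → X → Prop) (wf : WellFounded r) :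
    X → ZFSet.{u} :=
  wf.fix fun x d => ZFSet.range fun y : {y // r y x} => d y.1 y.2

theorem isDecoration_decoration {X : Type u} (r : X → X → Prop) (wf : WellFounded r) :
    IsDecoration r (decoration r wf) := fun x z => by
  rw [decoration, wf.fix_eq, ZFSet.mem_range, Subtype.exists]
  exact exists_congr fun _ => ⟨fun ⟨h, e⟩ => ⟨h, e⟩, fun ⟨h, e⟩ => ⟨h, e⟩⟩

theorem isDecoration_kerLift {X : Type*} {g : X → ZFSet.{u}}
    (hg : ∀ x, ∀ z ∈ g x, z ∈ Set.range g) :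
    IsDecoration (fun p q => Setoid.kerLift g p ∈ Setoid.kerLift g q) (Setoid.kerLift g) :=
  isDecoration_of_range_transitive
    (Quotient.ind fun x z hz => by obtain ⟨y, rfl⟩ := hg x z hz; exact ⟨⟦y⟧, rfl⟩)

/-- The image of `g` ordered by `∈`, realised as a quotient of `X` to stay in universe `u`. -/
noncomputable def WEApg.ofImage {X : Type u} (g : X → ZFSet.{u}) (x₀ : X)
    (hg : ∀ x, ∀ z ∈ g x, z ∈ Set.range g)
    (acc : ∀ x, ReflTransGen (fun a b => g a ∈ g b) x x₀) : WEApg.{u} where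
  carrier := Quotient (Setoid.ker g)
  rel p q := Setoid.kerLift g p ∈ Setoid.kerLift g q
  root := ⟦x₀⟧
  acc := Quotient.ind fun x => (acc x).lift _ fun _ _ h => h
  wf := isWFRel_iff_wellFounded.2 (InvImage.wf _ ZFSet.mem_wf)
  ext := (isDecoration_kerLift hg).isExtRel (Setoid.kerLift_injective g)

namespace PSet

/-- Finite paths down the membership tree of a pre-set; `none` is the empty path. -/
def Pos : PSet.{u} → Type u
  | ⟨α, A⟩ => Option (Σ a : α, Pos (A a))

def Pos.root : ∀ x : PSet.{u}, Pos x
  | ⟨_, _⟩ => none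

def Pos.toPSet : ∀ {x : PSet.{u}}, Pos x → PSet.{u}
  | ⟨α, A⟩, none => ⟨α, A⟩
  | ⟨_, A⟩, some ⟨a, p⟩ => Pos.toPSet (x := A a) p

theorem Pos.toPSet_root : ∀ x : PSet.{u}, (Pos.root x).toPSet = x
  | ⟨_, _⟩ => rfl

def Pos.child : ∀ {x : PSet.{u}} (p : Pos x), p.toPSet.Type → Pos x
  | ⟨_, _⟩, none, b => some ⟨b, Pos.root _⟩
  | ⟨_, A⟩, some ⟨a, p⟩, b => some ⟨a, Pos.child (x := A a) p b⟩

theorem Pos.toPSet_child : ∀ {x : PSet.{u}} (p : Pos x) (b : p.toPSet.Type),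
    (p.child b).toPSet = p.toPSet.Func b
  | ⟨_, A⟩, none, b => Pos.toPSet_root (A b)
  | ⟨_, A⟩, some ⟨a, p⟩, b => Pos.toPSet_child (x := A a) p b

theorem Pos.reflTransGen_root : ∀ {x : PSet.{u}} (p : Pos x),
    ReflTransGen (fun p q : Pos x => p.toPSet ∈ q.toPSet) p (Pos.root x)
  | ⟨_, _⟩, none => .refl
  | ⟨α, A⟩, some ⟨a, p⟩ => by
    refine ((Pos.reflTransGen_root p).lift (fun q => (some ⟨a, q⟩ : Pos ⟨α, A⟩))
      fun _ _ h => h).tail ?_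
    show (Pos.root (A a)).toPSet ∈ PSet.mk α A
    rw [Pos.toPSet_root]
    exact PSet.Mem.mk A a

theorem Pos.mem_range_of_mem_toPSet {x : PSet.{u}} (p : Pos x) :
    ∀ z ∈ ZFSet.mk p.toPSet, z ∈ Set.range fun q : Pos x => ZFSet.mk q.toPSet :=
  Quotient.ind fun _ ⟨b, hb⟩ =>
    ⟨p.child b, ZFSet.sound (by rw [Pos.toPSet_child]; exact hb.symm)⟩

end PSet

namespace WEApg

theorem wellFounded (Z : WEApg.{u}) : WellFounded Z.rel :=
  isWFRel_iff_wellFounded.1 Z.wf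

theorem isDecoration_decoration (Z : WEApg.{u}) :
    IsDecoration Z.rel (decoration Z.rel Z.wellFounded) :=
  _root_.isDecoration_decoration Z.rel Z.wellFounded

noncomputable def toZFSet (Z : WEApg.{u}) : ZFSet.{u} :=
  decoration Z.rel Z.wellFounded Z.root

theorem iso_iff_toZFSet_eq {W Z : WEApg.{u}} : W.Iso Z ↔ W.toZFSet = Z.toZFSet :=
  W.isDecoration_decoration.pIso_iff W.wellFounded Z.wellFounded W.ext Z.ext
    Z.isDecoration_decoration W.acc Z.acc

def below (Z : WEApg.{u}) (z : Z.carrier) : WEApg.{u} where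
  carrier := Below Z.rel z
  rel := belowRel Z.rel z
  root := belowRoot Z.rel z
  acc := fun ⟨a, ha⟩ => by
    induction ha using ReflTransGen.head_induction_on with
    | refl => exact .refl
    | head h hc ih =>
      exact .head (show belowRel Z.rel z ⟨_, .head h hc⟩ ⟨_, hc⟩ from h) ih
  wf := isWFRel_iff_wellFounded.2 (InvImage.wf Subtype.val Z.wellFounded)
  ext := (Z.isDecoration_decoration.below z).isExtRel
    ((Z.isDecoration_decoration.injective Z.wellFounded Z.ext).comp Subtype.val_injective)

theorem toZFSet_below (Z : WEApg.{u}) (z : Z.carrier) :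
    (Z.below z).toZFSet = decoration Z.rel Z.wellFounded z := by
  rw [toZFSet, (Z.below z).isDecoration_decoration.unique (Z.below z).wellFounded
    (Z.isDecoration_decoration.below z)]
  rfl

theorem mem_iff_toZFSet_mem {W Z : WEApg.{u}} : W.Mem Z ↔ W.toZFSet ∈ Z.toZFSet := by
  rw [toZFSet, Z.isDecoration_decoration]
  refine exists_congr fun z => and_congr_right fun _ => ?_
  rw [← toZFSet_below, eq_comm]
  exact iso_iff_toZFSet_eq (W := W) (Z := Z.below z)

theorem toZFSet_ofImage {X : Type u} (g : X → ZFSet.{u}) (x₀ : X)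
    (hg : ∀ x, ∀ z ∈ g x, z ∈ Set.range g)
    (acc : ∀ x, ReflTransGen (fun a b => g a ∈ g b) x x₀) :
    (ofImage g x₀ hg acc).toZFSet = g x₀ := by
  rw [toZFSet, (ofImage g x₀ hg acc).isDecoration_decoration.unique
    (ofImage g x₀ hg acc).wellFounded (isDecoration_kerLift hg)]
  rfl

theorem toZFSet_surjective : Surjective toZFSet.{u} :=
  Quotient.ind fun x =>
    ⟨ofImage (fun p : x.Pos => ZFSet.mk p.toPSet) (PSet.Pos.root x)
      PSet.Pos.mem_range_of_mem_toPSet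
      fun p => .mono (fun _ _ => ZFSet.mk_mem_iff.2) _ _ (PSet.Pos.reflTransGen_root p),
    by rw [toZFSet_ofImage, PSet.Pos.toPSet_root]; rfl⟩

theorem toZFSet_eq_iff {W : WEApg.{u}} {s : ZFSet.{u}} :
    W.toZFSet = s ↔ ∀ Z : WEApg.{u}, Z.Mem W ↔ Z.toZFSet ∈ s := by
  simp only [mem_iff_toZFSet_mem, ZFSet.ext_iff, toZFSet_surjective.forall]

end WEApg

open WEApg in
theorem isKuratowskiPair_iff {W A B : WEApg.{u}} :
    IsKuratowskiPair W A B ↔ W.toZFSet = ZFSet.pair A.toZFSet B.toZFSet := by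
  have members_singleton (V C : WEApg.{u}) :
      (∀ Z : WEApg.{u}, Z.Mem V ↔ Z.Iso C) ↔ V.toZFSet = {C.toZFSet} := by
    simp only [toZFSet_eq_iff, iso_iff_toZFSet_eq, ZFSet.mem_singleton]
  have members_pair (V C D : WEApg.{u}) :
      (∀ Z : WEApg.{u}, Z.Mem V ↔ Z.Iso C ∨ Z.Iso D) ↔ V.toZFSet = {C.toZFSet, D.toZFSet} := by
    simp only [toZFSet_eq_iff, iso_iff_toZFSet_eq, ZFSet.mem_pair]
  simp only [IsKuratowskiPair, members_singleton, members_pair]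
  constructor
  · rintro ⟨P, Q, hW, hP, hQ⟩
    rw [hW, hP, hQ, ZFSet.pair]
  · intro hW
    obtain ⟨P, hP⟩ := toZFSet_surjective {A.toZFSet}
    obtain ⟨Q, hQ⟩ := toZFSet_surjective {A.toZFSet, B.toZFSet}
    exact ⟨P, Q, by rw [hW, hP, hQ, ZFSet.pair], hP, hQ⟩

/-- Cartesian products (with Kuratowski ordered pairs) exist for well-founded
extensional apgs. -/
theorem weapg_cartesian_product (X Y : WEApg.{u}) :
    ∃ Z : WEApg.{u}, ∀ W : WEApg.{u},
      W.Mem Z ↔ ∃ A B : WEApg.{u}, A.Mem X ∧ B.Mem Y ∧ IsKuratowskiPair W A B := by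
  obtain ⟨Z, hZ⟩ := WEApg.toZFSet_surjective (ZFSet.prod X.toZFSet Y.toZFSet)
  refine ⟨Z, fun W => ?_⟩
  simp only [WEApg.mem_iff_toZFSet_mem, hZ, ZFSet.mem_prod, isKuratowskiPair_iff,
    WEApg.toZFSet_surjective.exists, exists_and_left]
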